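/- arXiv:1404.2832 — 4 statements merged into one kernel-verified Lean document; each statement's English description precedes it below -/
import Mathlib

section
/- Let m ≥ 1 and λ_1 ≥ λ_2 ≥ … ≥ λ_m > 0, and let X_1, …, X_m be independent random variables with X_j exponentially distributed with parameter λ_j. Consider the mechanism Proportional, which on input x ∈ [0,∞)^m allocates item j with probability λ_j/λ_1 and charges γ*_m/λ_1 whenever Σ_{j=1}^m λ_j x_j ≥ γ*_m, and allocates nothing and charges 0 otherwise. Then Proportional is incentive compatible and individually rational, and its expected revenue equals E[(γ*_m/λ_1) · 1{Σ_j λ_j X_j ≥ γ*_m}] = (γ*_m)^{m+1} e^{−γ*_m} / ((m−1)! · λ_1). -/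
/-!
The scaled valuations `λ_j X_j` are i.i.d. standard exponentials, so `∑ λ_j X_j` is Erlang
distributed: peeling off one coordinate and convolving with `e^{-u}` shows by induction that
`P(∑ λ_j X_j ≥ c) = e^{-c} ∑_{k<m} c^k / k!` for `c > 0`. Differentiating
`-e^{-t} ∑_{k≤n} t^k / k!` identifies this tail with `Γ(m, c) / (m-1)!`, and integration by
parts gives `Γ(m+1, w) = w^m e^{-w} + m Γ(m, w)`, so at the root `γ` of `g(m, ·)` we get
`Γ(m, γ) = γ^m e^{-γ}`. The revenue is `γ/λ_1` times this probability.

Reporting `x'` when the valuation is `x` yields utility `1{∑ λ_j x'_j ≥ γ} (∑ λ_j x_j - γ) / λ_1`,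
which truthful reporting maximizes and which is nonnegative there.
-/

open MeasureTheory

/-- Density of the exponential distribution with parameter `l`. -/
noncomputable def expPDF (l x : ℝ) : ℝ := if 0 ≤ x then l * Real.exp (-(l * x)) else 0

/-- The product of `m` independent exponential distributions with parameters `l j`. -/
noncomputable def expProd (m : ℕ) (l : Fin m → ℝ) : Measure (Fin m → ℝ) :=
  Measure.pi fun j => volume.withDensity fun x => ENNReal.ofReal (expPDF (l j) x)

/-- The upper incomplete Gamma function `Γ(m, w) = ∫_w^∞ t^{m−1} e^{−t} dt`. -/
noncomputable def iGamma (m : ℕ) (w : ℝ) : ℝ := ∫ t in Set.Ioi w, t ^ (m - 1) * Real.exp (-t)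

/-- `g(m, w) = Γ(m+1, w) − (m+1) Γ(m, w)`. -/
noncomputable def gFun (m : ℕ) (w : ℝ) : ℝ := iGamma (m + 1) w - (m + 1) * iGamma m w

/-- Allocation of the `Proportional` mechanism: when `∑ j λ_j x_j ≥ γ*_m`, item `j` is sold
with probability `λ_j / λ_1` (where `λ_1 = l 0` is the largest parameter); otherwise
nothing is allocated. -/
noncomputable def propAlloc (m : ℕ) (hm : 1 ≤ m) (l : Fin m → ℝ) (γ : ℝ) :
    (Fin m → ℝ) → Fin m → ℝ :=
  fun x j => if γ ≤ ∑ i, l i * x i then l j / l ⟨0, hm⟩ else 0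

/-- Payment of the `Proportional` mechanism: charge `γ*_m / λ_1` exactly when
`∑ j λ_j x_j ≥ γ*_m`. -/
noncomputable def propPay (m : ℕ) (hm : 1 ≤ m) (l : Fin m → ℝ) (γ : ℝ) :
    (Fin m → ℝ) → ℝ :=
  fun x => if γ ≤ ∑ i, l i * x i then γ / l ⟨0, hm⟩ else 0

open Real Set Filter Topology ProbabilityTheory
open scoped Nat ENNReal

noncomputable def expPartialSum (n : ℕ) (x : ℝ) : ℝ := ∑ k ∈ Finset.range n, x ^ k / k !

lemma expPartialSum_succ (n : ℕ) (x : ℝ) :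
    expPartialSum (n + 1) x = expPartialSum n x + x ^ n / n ! :=
  Finset.sum_range_succ _ _

lemma expPartialSum_one (x : ℝ) : expPartialSum 1 x = 1 := by
  simp [expPartialSum]

lemma expPartialSum_succ_zero (n : ℕ) : expPartialSum (n + 1) 0 = 1 := by
  simp [expPartialSum, Finset.sum_range_succ']

lemma hasDerivAt_expPartialSum_succ (n : ℕ) (x : ℝ) :
    HasDerivAt (expPartialSum (n + 1)) (expPartialSum n x) x := by
  induction n with
  | zero =>
    rw [show expPartialSum 1 = fun _ => 1 from funext expPartialSum_one]
    simpa [expPartialSum] using hasDerivAt_const x (1 : ℝ)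
  | succ n ih =>
    have hpow : HasDerivAt (fun t : ℝ => t ^ (n + 1) / (n + 1)!) (x ^ n / n !) x := by
      refine ((hasDerivAt_pow (n + 1) x).div_const ((n + 1)! : ℝ)).congr_deriv ?_
      push_cast [Nat.factorial_succ, Nat.add_sub_cancel]
      field_simp
    simpa only [← expPartialSum_succ] using ih.fun_add hpow

lemma tendsto_exp_neg_mul_expPartialSum (n : ℕ) :
    Tendsto (fun t => exp (-t) * expPartialSum n t) atTop (𝓝 0) := by
  have h := tendsto_finsetSum (Finset.range n) fun k _ =>
    (tendsto_pow_mul_exp_neg_atTop_nhds_zero k).div_const (k ! : ℝ)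
  simp only [zero_div, Finset.sum_const_zero] at h
  refine h.congr fun t => ?_
  rw [expPartialSum, Finset.mul_sum]
  exact Finset.sum_congr rfl fun k _ => by ring

lemma iGamma_succ_eq {w : ℝ} (hw : 0 ≤ w) (n : ℕ) :
    iGamma (n + 1) w = n ! * (exp (-w) * expPartialSum (n + 1) w) := by
  have hderiv (t : ℝ) : HasDerivAt (fun t => -(n ! * (exp (-t) * expPartialSum (n + 1) t)))
      (t ^ n * exp (-t)) t := by
    have h := ((((hasDerivAt_neg t).exp).fun_mul (hasDerivAt_expPartialSum_succ n t)).const_mul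
      (n ! : ℝ)).fun_neg
    refine h.congr_deriv ?_
    rw [expPartialSum_succ]
    field_simp
    ring
  have hlim := ((tendsto_exp_neg_mul_expPartialSum (n + 1)).const_mul (n ! : ℝ)).neg
  rw [mul_zero, neg_zero] at hlim
  rw [iGamma, Nat.add_sub_cancel, integral_Ioi_of_hasDerivAt_of_nonneg' (fun t _ => hderiv t)
    (fun t ht => by have : 0 < t := hw.trans_lt ht; positivity) hlim]
  ring

lemma iGamma_succ_succ {w : ℝ} (hw : 0 ≤ w) (n : ℕ) :
    iGamma (n + 2) w = w ^ (n + 1) * exp (-w) + (n + 1) * iGamma (n + 1) w := by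
  rw [iGamma_succ_eq hw, iGamma_succ_eq hw, expPartialSum_succ (n + 1), Nat.factorial_succ]
  push_cast
  field_simp
  ring

lemma iGamma_eq_of_gFun_eq_zero {w : ℝ} (hw : 0 ≤ w) {n : ℕ} (h : gFun (n + 1) w = 0) :
    iGamma (n + 1) w = w ^ (n + 1) * exp (-w) := by
  rw [gFun, iGamma_succ_succ hw] at h
  push_cast at h
  linarith

/-- `P(E₁ + ⋯ + Eₙ ≥ c)` for i.i.d. standard exponential `Eᵢ`. -/
noncomputable def erlangTail (n : ℕ) (c : ℝ) : ℝ :=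
  if c ≤ 0 then 1 else exp (-c) * expPartialSum n c

lemma erlangTail_of_nonpos {n : ℕ} {c : ℝ} (hc : c ≤ 0) : erlangTail n c = 1 := if_pos hc

lemma erlangTail_of_pos {n : ℕ} {c : ℝ} (hc : 0 < c) :
    erlangTail n c = exp (-c) * expPartialSum n c := if_neg hc.not_ge

lemma erlangTail_nonneg (n : ℕ) (c : ℝ) : 0 ≤ erlangTail n c := by
  rcases le_or_gt c 0 with hc | hc
  · simp [erlangTail_of_nonpos hc]
  · rw [erlangTail_of_pos hc, expPartialSum]
    positivity

lemma erlangTail_le_one (n : ℕ) (c : ℝ) : erlangTail n c ≤ 1 := by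
  rcases le_or_gt c 0 with hc | hc
  · simp [erlangTail_of_nonpos hc]
  · calc erlangTail n c = exp (-c) * expPartialSum n c := erlangTail_of_pos hc
      _ ≤ exp (-c) * exp c := by gcongr; exact Real.sum_le_exp_of_nonneg hc.le n
      _ = 1 := by rw [← exp_add, neg_add_cancel, exp_zero]

lemma erlangTail_succ_eq_of_gFun_eq_zero {w : ℝ} (hw : 0 < w) {n : ℕ} (h : gFun (n + 1) w = 0) :
    erlangTail (n + 1) w = w ^ (n + 1) * exp (-w) / n ! := by
  rw [erlangTail_of_pos hw, eq_div_iff (by positivity), ← iGamma_eq_of_gFun_eq_zero hw.le h,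
    iGamma_succ_eq hw.le]
  ring

@[fun_prop]
lemma measurable_erlangTail (n : ℕ) : Measurable (erlangTail n) :=
  Measurable.ite measurableSet_Iic measurable_const (by unfold expPartialSum; fun_prop)

lemma integrableOn_exp_neg_mul_erlangTail (n : ℕ) (c a : ℝ) :
    IntegrableOn (fun u => exp (-u) * erlangTail n (c - u)) (Ioi a) := by
  refine Integrable.mono (exp_neg_integrableOn_Ioi a one_pos)
    (by fun_prop : Measurable fun u => exp (-u) * erlangTail n (c - u)).aestronglyMeasurable ?_
  refine ae_of_all _ fun u => ?_
  rw [norm_mul, norm_of_nonneg (exp_pos _).le, norm_of_nonneg (erlangTail_nonneg _ _),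
    norm_of_nonneg (exp_pos _).le, neg_one_mul]
  exact mul_le_of_le_one_right (exp_pos _).le (erlangTail_le_one _ _)

lemma integral_exp_neg_mul_erlangTail (n : ℕ) (c : ℝ) :
    ∫ u in Ioi 0, exp (-u) * erlangTail n (c - u) = erlangTail (n + 1) c := by
  have htail {a : ℝ} (ha : c ≤ a) :
      ∫ u in Ioi a, exp (-u) * erlangTail n (c - u) = exp (-a) := by
    rw [← integral_exp_neg_Ioi]
    refine setIntegral_congr_fun measurableSet_Ioi fun u hu => ?_
    rw [erlangTail_of_nonpos (by linarith [mem_Ioi.mp hu]), mul_one]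
  rcases le_or_gt c 0 with hc | hc
  · rw [htail hc, erlangTail_of_nonpos hc, neg_zero, exp_zero]
  have hbody : ∫ u in (0)..c, exp (-u) * erlangTail n (c - u)
      = exp (-c) * ∫ u in (0)..c, expPartialSum n (c - u) := by
    rw [← intervalIntegral.integral_const_mul]
    refine intervalIntegral.integral_congr_ae ?_
    filter_upwards [Measure.ae_ne volume c] with u hne hu
    rw [uIoc_of_le hc.le] at hu
    rw [erlangTail_of_pos (sub_pos.mpr (lt_of_le_of_ne hu.2 hne)), ← mul_assoc, ← exp_add]
    ring_nf
  have hftc : ∫ u in (0)..c, expPartialSum n (c - u) = expPartialSum (n + 1) c - 1 := by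
    rw [intervalIntegral.integral_comp_sub_left (expPartialSum n), sub_self, sub_zero,
      intervalIntegral.integral_eq_sub_of_hasDerivAt
        (fun x _ => hasDerivAt_expPartialSum_succ n x)
        ((by unfold expPartialSum; fun_prop : Continuous (expPartialSum n)).intervalIntegrable _ _)]
    rw [expPartialSum_succ_zero]
  rw [← intervalIntegral.integral_interval_add_Ioi (integrableOn_exp_neg_mul_erlangTail n c 0)
    (integrableOn_exp_neg_mul_erlangTail n c c), hbody, hftc, htail le_rfl, erlangTail_of_pos hc]
  ring

lemma expMeasure_eq_withDensity_expPDF (r : ℝ) :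
    expMeasure r = volume.withDensity fun x => ENNReal.ofReal (expPDF r x) := by
  rw [expMeasure, gammaMeasure]
  congr with x
  exact exponentialPDF_eq r x

lemma expProd_eq_pi_expMeasure (m : ℕ) (l : Fin m → ℝ) :
    expProd m l = Measure.pi fun j => expMeasure (l j) := by
  simp only [expProd, expMeasure_eq_withDensity_expPDF]

@[fun_prop]
lemma measurable_expPDF (r : ℝ) : Measurable (expPDF r) :=
  Measurable.ite measurableSet_Ici (by fun_prop) measurable_const

lemma lintegral_expMeasure_comp_mul {r : ℝ} (hr : 0 < r) {g : ℝ → ℝ≥0∞} (hg : Measurable g) :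
    ∫⁻ y, g (r * y) ∂expMeasure r = ∫⁻ u in Ioi 0, ENNReal.ofReal (exp (-u)) * g u := by
  have hsupp : Function.support ((fun y => ENNReal.ofReal (expPDF r y)) * fun y => g (r * y))
      ⊆ Ici 0 :=
    fun y hy => mem_Ici.mpr <| not_lt.mp fun hneg => hy (by simp [expPDF, hneg.not_ge])
  have hsubst := lintegral_image_eq_lintegral_abs_deriv_mul (measurableSet_Ioi (a := 0))
    (fun y _ => ((hasDerivAt_id' y).const_mul r).hasDerivWithinAt)
    (mul_right_injective₀ hr.ne').injOn
    (fun u => ENNReal.ofReal (exp (-u)) * g u)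
  rw [image_mul_left_Ioi hr, mul_zero, mul_one, abs_of_pos hr] at hsubst
  rw [hsubst, expMeasure_eq_withDensity_expPDF, lintegral_withDensity_eq_lintegral_mul₀
    (by fun_prop) (hg.comp (measurable_const_mul r)).aemeasurable (g := fun y => g (r * y)),
    ← setLIntegral_eq_of_support_subset hsupp, ← setLIntegral_congr Ioi_ae_eq_Ici]
  refine setLIntegral_congr_fun measurableSet_Ioi fun y hy => ?_
  rw [Pi.mul_apply, expPDF, if_pos (le_of_lt (mem_Ioi.mp hy)), ENNReal.ofReal_mul hr.le, mul_assoc]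

lemma lintegral_exp_neg_mul_erlangTail (n : ℕ) (c : ℝ) :
    ∫⁻ u in Ioi 0, ENNReal.ofReal (exp (-u)) * ENNReal.ofReal (erlangTail n (c - u))
      = ENNReal.ofReal (erlangTail (n + 1) c) := by
  simp_rw [← ENNReal.ofReal_mul (exp_pos _).le]
  rw [← ofReal_integral_eq_lintegral_ofReal (integrableOn_exp_neg_mul_erlangTail n c 0)
    (ae_of_all _ fun u => mul_nonneg (exp_pos _).le (erlangTail_nonneg n _)),
    integral_exp_neg_mul_erlangTail]

lemma pi_expMeasure_setOf_le_sum_mul : ∀ (n : ℕ) (l : Fin n → ℝ), (∀ j, 0 < l j) → ∀ c : ℝ,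
    Measure.pi (fun j => expMeasure (l j)) {x | c ≤ ∑ i, l i * x i}
      = ENNReal.ofReal (erlangTail n c)
  | 0, l, _, c => by
    rcases le_or_gt c 0 with hc | hc
    · simp [hc, erlangTail_of_nonpos]
    · simp [hc.not_ge, erlangTail_of_pos hc, expPartialSum]
  | n + 1, l, hl, c => by
    have := fun j => isProbabilityMeasure_expMeasure (hl j)
    have hS : MeasurableSet {x : Fin (n + 1) → ℝ | c ≤ ∑ i, l i * x i} :=
      measurableSet_le measurable_const (by fun_prop)
    have hmp := (measurePreserving_piFinSuccAbove (fun j => expMeasure (l j)) 0).symm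
    have hslice (y : ℝ) : Prod.mk y ⁻¹' ((MeasurableEquiv.piFinSuccAbove (fun _ => ℝ) 0).symm ⁻¹'
        {x | c ≤ ∑ i, l i * x i}) = {z | c - l 0 * y ≤ ∑ i, l i.succ * z i} := by
      ext z
      simp [MeasurableEquiv.piFinSuccAbove, Fin.insertNthEquiv, Fin.sum_univ_succ, add_comm]
    rw [← hmp.measure_preimage hS.nullMeasurableSet,
      Measure.prod_apply (hS.preimage hmp.measurable)]
    simp_rw [hslice, Fin.succAbove_zero,
      pi_expMeasure_setOf_le_sum_mul n (fun i => l i.succ) (fun i => hl i.succ)]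
    rw [lintegral_expMeasure_comp_mul (hl 0) (g := fun u => ENNReal.ofReal (erlangTail n (c - u)))
      (by fun_prop), lintegral_exp_neg_mul_erlangTail]

section Proportional

variable {m : ℕ} (hm : 1 ≤ m) (l : Fin m → ℝ) (γ : ℝ)

lemma propAlloc_mem_Icc (hl : ∀ j, 0 ≤ l j) (hmax : ∀ j, l j ≤ l ⟨0, hm⟩) (x : Fin m → ℝ)
    (j : Fin m) : propAlloc m hm l γ x j ∈ Icc (0 : ℝ) 1 := by
  unfold propAlloc
  split_ifs
  · exact ⟨div_nonneg (hl j) (hl _), div_le_one_of_le₀ (hmax j) (hl _)⟩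
  · exact ⟨le_rfl, zero_le_one⟩

lemma propUtility_eq (x x' : Fin m → ℝ) :
    ∑ j, propAlloc m hm l γ x' j * x j - propPay m hm l γ x'
      = if γ ≤ ∑ i, l i * x' i then (∑ i, l i * x i - γ) / l ⟨0, hm⟩ else 0 := by
  unfold propAlloc propPay
  split_ifs <;> simp [Finset.sum_div, sub_div, div_mul_eq_mul_div]

lemma propUtility_nonneg (hl0 : 0 ≤ l ⟨0, hm⟩) (x : Fin m → ℝ) :
    0 ≤ ∑ j, propAlloc m hm l γ x j * x j - propPay m hm l γ x := by
  rw [propUtility_eq]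
  split_ifs with h
  · exact div_nonneg (sub_nonneg.mpr h) hl0
  · exact le_rfl

lemma propUtility_le (hl0 : 0 ≤ l ⟨0, hm⟩) (x x' : Fin m → ℝ) :
    ∑ j, propAlloc m hm l γ x' j * x j - propPay m hm l γ x' ≤
      ∑ j, propAlloc m hm l γ x j * x j - propPay m hm l γ x := by
  rw [propUtility_eq, propUtility_eq]
  split_ifs with h' h h
  · exact le_rfl
  · exact div_nonpos_of_nonpos_of_nonneg (by linarith) hl0
  · exact div_nonneg (sub_nonneg.mpr h) hl0
  · exact le_rfl

lemma integral_propPay (hl : ∀ j, 0 < l j) :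
    ∫ x, propPay m hm l γ x ∂expProd m l = γ / l ⟨0, hm⟩ * erlangTail m γ := by
  have hS : MeasurableSet {x : Fin m → ℝ | γ ≤ ∑ i, l i * x i} :=
    measurableSet_le measurable_const (by fun_prop)
  have hpay : propPay m hm l γ = {x | γ ≤ ∑ i, l i * x i}.indicator fun _ => γ / l ⟨0, hm⟩ := by
    ext x
    simp [propPay, indicator]
  have := fun j => isProbabilityMeasure_expMeasure (hl j)
  rw [hpay, integral_indicator_const _ hS, expProd_eq_pi_expMeasure, measureReal_def,
    pi_expMeasure_setOf_le_sum_mul m l hl, ENNReal.toReal_ofReal (erlangTail_nonneg m γ),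
    smul_eq_mul, mul_comm]

end Proportional

/-- **The `Proportional` mechanism.** For `m` goods with independent exponential valuations
with parameters `λ_1 ≥ λ_2 ≥ … ≥ λ_m > 0` and `γ*_m` the unique positive root of `g(m, ·)`,
the mechanism `Proportional` is incentive compatible and individually rational on `[0,∞)^m`,
its allocation probabilities lie in `[0,1]`, and its expected revenue
`E[(γ*_m/λ_1) · 1{∑_j λ_j X_j ≥ γ*_m}]` equals `(γ*_m)^{m+1} e^{−γ*_m} / ((m−1)! λ_1)`. -/
theorem proportional_mechanism (m : ℕ) (hm : 1 ≤ m) (l : Fin m → ℝ) (hl : ∀ j, 0 < l j)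
    (hsort : ∀ i j : Fin m, i ≤ j → l j ≤ l i)
    (γ : ℝ) (hγ_pos : 0 < γ) (hγ_root : gFun m γ = 0) :
    (∀ x ∈ Set.Ici (0 : Fin m → ℝ), ∀ j, propAlloc m hm l γ x j ∈ Set.Icc (0:ℝ) 1) ∧
    (∀ x ∈ Set.Ici (0 : Fin m → ℝ),
      0 ≤ (∑ j, propAlloc m hm l γ x j * x j) - propPay m hm l γ x) ∧
    (∀ x ∈ Set.Ici (0 : Fin m → ℝ), ∀ x' ∈ Set.Ici (0 : Fin m → ℝ),
      (∑ j, propAlloc m hm l γ x' j * x j) - propPay m hm l γ x' ≤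
        (∑ j, propAlloc m hm l γ x j * x j) - propPay m hm l γ x) ∧
    ∫ x, propPay m hm l γ x ∂(expProd m l) =
      γ ^ (m + 1) * Real.exp (-γ) / (Nat.factorial (m - 1) * l ⟨0, hm⟩) := by
  have hl0 := (hl ⟨0, hm⟩).le
  refine ⟨fun x _ => propAlloc_mem_Icc hm l γ (fun j => (hl j).le)
      (fun j => hsort _ j (Fin.mk_le_mk.mpr (Nat.zero_le _))) x,
    fun x _ => propUtility_nonneg hm l γ hl0 x,
    fun x _ x' _ => propUtility_le hm l γ hl0 x x', ?_⟩
  obtain ⟨n, rfl⟩ : ∃ n, m = n + 1 := ⟨m - 1, by omega⟩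
  rw [integral_propPay hm l γ hl, erlangTail_succ_eq_of_gFun_eq_zero hγ_pos hγ_root,
    Nat.add_sub_cancel]
  ring
end

section
/- Fix a positive integer m and define g(m, w) = Γ(m+1, w) − (m+1)Γ(m, w) for w ≥ 0. Then g(m, 0) = −(m−1)!, g(m, ·) is strictly increasing on [0, m+1] and strictly decreasing on [m+1, ∞), g(m, w) → 0 as w → ∞, and there exists a unique γ ∈ (0, ∞) with g(m, γ) = 0; moreover this root satisfies γ ∈ (0, m+1), g(m, w) < 0 for all w ∈ [0, γ), and g(m, w) > 0 for all w ∈ (γ, ∞). -/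
/-!
Differentiating in the lower limit gives `g'(m, w) = w^{m-1} e^{-w} (m + 1 - w)`, so `g(m, ·)`
rises on `[0, m+1]` and then falls towards its limit `0`; in particular it is positive on
`[m+1, ∞)`. Since `g(m, 0) = m! - (m+1)(m-1)! = -(m-1)! < 0`, the intermediate value theorem
and strict monotonicity on `[0, m+1]` give exactly one positive root, and the signs around it.
-/

open MeasureTheory Filter

open Set
open scoped Nat Topology

theorem hasDerivAt_integral_Ioi {f : ℝ → ℝ} (hf : Continuous f) {a : ℝ}
    (hfi : IntegrableOn f (Ioi a)) (x : ℝ) :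
    HasDerivAt (fun x => ∫ t in Ioi x, f t) (-f x) x := by
  -- `∫ t in x..a` is oriented, so this split holds on both sides of `a`.
  have hsplit :
      (fun x => ∫ t in Ioi x, f t) = fun x => (∫ t in x..a, f t) + ∫ t in Ioi a, f t :=
    funext fun y =>
      (intervalIntegral.integral_interval_add_Ioi' (hf.intervalIntegrable y a) hfi).symm
  rw [hsplit]
  exact (intervalIntegral.integral_hasDerivAt_left (hf.intervalIntegrable x a)
    hf.aestronglyMeasurable.stronglyMeasurableAtFilter hf.continuousAt).add_const _

section Unimodal

variable {g : ℝ → ℝ} {c : ℝ}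

theorem pos_of_strictAntiOn_Ici_of_tendsto_zero (hanti : StrictAntiOn g (Ici c))
    (hlim : Tendsto g atTop (𝓝 0)) {w : ℝ} (hw : c ≤ w) : 0 < g w := by
  have hnonneg : 0 ≤ g (w + 1) := by
    refine le_of_tendsto hlim ?_
    filter_upwards [eventually_ge_atTop (w + 1)] with b hb
    exact hanti.antitoneOn (mem_Ici.2 (by linarith)) (mem_Ici.2 (by linarith)) hb
  calc 0 ≤ g (w + 1) := hnonneg
    _ < g w := hanti hw (mem_Ici.2 (by linarith)) (by linarith)

theorem lt_and_sign_of_eq_zero (hmono : StrictMonoOn g (Icc 0 c))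
    (hanti : StrictAntiOn g (Ici c)) (hlim : Tendsto g atTop (𝓝 0)) {γ : ℝ} (hγ : 0 ≤ γ)
    (hgγ : g γ = 0) :
    γ < c ∧ (∀ w ∈ Ico 0 γ, g w < 0) ∧ ∀ w ∈ Ioi γ, 0 < g w := by
  have hγc : γ < c := by
    by_contra! h
    exact (pos_of_strictAntiOn_Ici_of_tendsto_zero hanti hlim h).ne' hgγ
  refine ⟨hγc, fun w hw => ?_, fun w hw => ?_⟩
  · exact hgγ ▸ hmono ⟨hw.1, by linarith [hw.2]⟩ ⟨hγ, hγc.le⟩ hw.2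
  · rcases le_or_gt w c with hwc | hcw
    · exact hgγ ▸ hmono ⟨hγ, hγc.le⟩ ⟨hγ.trans hw.out.le, hwc⟩ hw
    · exact pos_of_strictAntiOn_Ici_of_tendsto_zero hanti hlim hcw.le

theorem existsUnique_pos_root (hc : 0 ≤ c) (hcont : ContinuousOn g (Icc 0 c))
    (hmono : StrictMonoOn g (Icc 0 c)) (hanti : StrictAntiOn g (Ici c))
    (hlim : Tendsto g atTop (𝓝 0)) (hg0 : g 0 < 0) :
    ∃! γ, 0 < γ ∧ g γ = 0 := by
  obtain ⟨γ, hγ, hgγ⟩ : ∃ γ ∈ Ioo 0 c, g γ = 0 :=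
    intermediate_value_Ioo hc hcont
      ⟨hg0, pos_of_strictAntiOn_Ici_of_tendsto_zero hanti hlim le_rfl⟩
  refine ⟨γ, ⟨hγ.1, hgγ⟩, fun y ⟨hy, hgy⟩ => ?_⟩
  have hyc := (lt_and_sign_of_eq_zero hmono hanti hlim hy.le hgy).1
  exact hmono.injOn ⟨hy.le, hyc.le⟩ ⟨hγ.1.le, hγ.2.le⟩ (hgy.trans hgγ.symm)

end Unimodal

theorem integrableOn_pow_mul_exp_neg_Ioi_zero (n : ℕ) :
    IntegrableOn (fun t : ℝ => t ^ n * Real.exp (-t)) (Ioi 0) := by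
  refine (Real.GammaIntegral_convergent (s := n + 1) (by positivity)).congr_fun
    (fun t _ => ?_) measurableSet_Ioi
  dsimp only
  rw [add_sub_cancel_right, Real.rpow_natCast, mul_comm]

theorem hasDerivAt_iGamma (m : ℕ) (w : ℝ) :
    HasDerivAt (iGamma m) (-(w ^ (m - 1) * Real.exp (-w))) w :=
  hasDerivAt_integral_Ioi (by fun_prop) (integrableOn_pow_mul_exp_neg_Ioi_zero (m - 1)) w

theorem continuous_iGamma (m : ℕ) : Continuous (iGamma m) :=
  continuous_iff_continuousAt.2 fun w => (hasDerivAt_iGamma m w).continuousAt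

theorem tendsto_iGamma_atTop (m : ℕ) : Tendsto (iGamma m) atTop (𝓝 0) :=
  tendsto_integral_Ioi_zero tendsto_id

theorem iGamma_succ_zero (n : ℕ) : iGamma (n + 1) 0 = n ! := by
  rw [← Real.Gamma_nat_eq_factorial, Real.Gamma_eq_integral (by positivity), iGamma]
  refine setIntegral_congr_fun measurableSet_Ioi fun t _ => ?_
  rw [add_sub_cancel_right, Nat.add_sub_cancel, Real.rpow_natCast, mul_comm]

theorem gFun_zero {m : ℕ} (hm : 1 ≤ m) : gFun m 0 = -((m - 1)! : ℝ) := by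
  obtain ⟨n, rfl⟩ := Nat.exists_eq_add_of_le' hm
  rw [gFun, iGamma_succ_zero, iGamma_succ_zero, Nat.add_sub_cancel, Nat.factorial_succ]
  push_cast
  ring

theorem hasDerivAt_gFun {m : ℕ} (hm : 1 ≤ m) (w : ℝ) :
    HasDerivAt (gFun m) (w ^ (m - 1) * Real.exp (-w) * (m + 1 - w)) w := by
  have h := (hasDerivAt_iGamma (m + 1) w).sub ((hasDerivAt_iGamma m w).const_mul ((m : ℝ) + 1))
  have hpow : w ^ (m + 1 - 1) = w ^ (m - 1) * w := by
    rw [Nat.add_sub_cancel, ← pow_succ, Nat.sub_add_cancel hm]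
  rw [hpow] at h
  exact h.congr_deriv (by ring)

theorem continuous_gFun (m : ℕ) : Continuous (gFun m) :=
  (continuous_iGamma (m + 1)).sub (continuous_const.mul (continuous_iGamma m))

theorem tendsto_gFun_atTop (m : ℕ) : Tendsto (gFun m) atTop (𝓝 0) := by
  have h := (tendsto_iGamma_atTop (m + 1)).sub ((tendsto_iGamma_atTop m).const_mul ((m : ℝ) + 1))
  rwa [mul_zero, sub_zero] at h

theorem strictMonoOn_gFun {m : ℕ} (hm : 1 ≤ m) :
    StrictMonoOn (gFun m) (Icc 0 ((m : ℝ) + 1)) := by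
  refine strictMonoOn_of_hasDerivWithinAt_pos (convex_Icc _ _) (continuous_gFun m).continuousOn
    (fun w _ => (hasDerivAt_gFun hm w).hasDerivWithinAt) fun w hw => ?_
  rw [interior_Icc] at hw
  have hw0 : 0 < w := hw.1
  exact mul_pos (by positivity) (sub_pos.2 hw.2)

theorem strictAntiOn_gFun {m : ℕ} (hm : 1 ≤ m) :
    StrictAntiOn (gFun m) (Ici ((m : ℝ) + 1)) := by
  refine strictAntiOn_of_hasDerivWithinAt_neg (convex_Ici _) (continuous_gFun m).continuousOn
    (fun w _ => (hasDerivAt_gFun hm w).hasDerivWithinAt) fun w hw => ?_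
  rw [interior_Ici] at hw
  have hw0 : 0 < w := lt_trans (by positivity) hw
  exact mul_neg_of_pos_of_neg (by positivity) (sub_neg.2 hw)

/-- **Shape of the function `g(m, ·)`.**  For every positive integer `m`:
`g(m, 0) = −(m−1)!`; `g(m, ·)` is strictly increasing on `[0, m+1]` and strictly decreasing
on `[m+1, ∞)`; `g(m, w) → 0` as `w → ∞`; there is a unique positive root `γ`, and this root
lies in `(0, m+1)`, with `g(m, w) < 0` for `w ∈ [0, γ)` and `g(m, w) > 0` for
`w ∈ (γ, ∞)`. -/
theorem gFun_properties (m : ℕ) (hm : 1 ≤ m) :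
    gFun m 0 = -(Nat.factorial (m - 1)) ∧
    StrictMonoOn (gFun m) (Set.Icc 0 ((m : ℝ) + 1)) ∧
    StrictAntiOn (gFun m) (Set.Ici ((m : ℝ) + 1)) ∧
    Tendsto (gFun m) atTop (nhds 0) ∧
    (∃! γ : ℝ, 0 < γ ∧ gFun m γ = 0) ∧
    (∀ γ : ℝ, 0 < γ → gFun m γ = 0 →
      γ < (m : ℝ) + 1 ∧
      (∀ w ∈ Set.Ico (0:ℝ) γ, gFun m w < 0) ∧
      (∀ w ∈ Set.Ioi γ, 0 < gFun m w)) := by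
  have hg0 := gFun_zero hm
  have hmono := strictMonoOn_gFun hm
  have hanti := strictAntiOn_gFun hm
  have hlim := tendsto_gFun_atTop m
  have hg0_neg : gFun m 0 < 0 := by
    rw [hg0, neg_neg_iff_pos]
    exact_mod_cast (m - 1).factorial_pos
  exact ⟨hg0, hmono, hanti, hlim,
    existsUnique_pos_root (by positivity) (continuous_gFun m).continuousOn hmono hanti hlim hg0_neg,
    fun γ hγ hgγ => lt_and_sign_of_eq_zero hmono hanti hlim hγ.le hgγ⟩
end

section
/- For every positive integer m, g(m, m+1) = (m−1)! · e^{−(m+1)} · Σ_{k=0}^{m−1} ( (m+1)^m/m! − (m+1)^k/k! ) and this quantity is strictly positive; that is, Γ(m+1, m+1) > (m+1) · Γ(m, m+1). -/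
open MeasureTheory

/-!
Integration by parts gives `Γ(m+1, w) = w^m e^{-w} + m Γ(m, w)`, hence
`g(m, w) = w^m e^{-w} - Γ(m, w)` and `Γ(m, w) = (m-1)! e^{-w} ∑_{k<m} w^k/k!`.
Since `w^k/k!` increases with `k` as long as `k < w`, every summand `w^m/m! - w^k/k!` is
positive once `w > m`, in particular at `w = m + 1`.
-/

open Real Set Finset Nat

theorem integrableOn_pow_mul_exp_neg_Ioi (n : ℕ) (w : ℝ) :
    IntegrableOn (fun t : ℝ => t ^ n * exp (-t)) (Ioi w) := by
  have h_pos : IntegrableOn (fun t : ℝ => t ^ n * exp (-t)) (Ioi 0) :=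
    (GammaIntegral_convergent (s := (n : ℝ) + 1) (by positivity)).congr_fun
      (fun t _ => by simp [mul_comm]) measurableSet_Ioi
  have h_cont : Continuous (fun t : ℝ => t ^ n * exp (-t)) := by fun_prop
  exact ((h_cont.integrableOn_Icc (a := w) (b := 0)).union h_pos).mono_set
    fun t ht => (le_or_gt t 0).imp (fun h => ⟨ht.le, h⟩) id

theorem iGamma_succ (m : ℕ) (w : ℝ) :
    iGamma (m + 1) w = w ^ m * exp (-w) + m * iGamma m w := by
  have h_deriv (t : ℝ) : HasDerivAt (fun t : ℝ => -(t ^ m * exp (-t)))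
      (t ^ m * exp (-t) - m * (t ^ (m - 1) * exp (-t))) t :=
    ((hasDerivAt_pow m t).fun_mul (hasDerivAt_neg t).exp).fun_neg.congr_deriv (by ring)
  have h_int := integral_Ioi_of_hasDerivAt_of_tendsto' (fun t _ => h_deriv t)
    ((integrableOn_pow_mul_exp_neg_Ioi m w).sub
      ((integrableOn_pow_mul_exp_neg_Ioi (m - 1) w).const_mul _))
    (by simpa using (tendsto_pow_mul_exp_neg_atTop_nhds_zero m).neg)
  rw [integral_sub (integrableOn_pow_mul_exp_neg_Ioi m w)
    ((integrableOn_pow_mul_exp_neg_Ioi (m - 1) w).const_mul _), integral_const_mul] at h_int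
  rw [iGamma, iGamma, Nat.add_sub_cancel]
  linarith

theorem iGamma_succ_eq_sum (n : ℕ) (w : ℝ) :
    iGamma (n + 1) w = n ! * exp (-w) * ∑ k ∈ range (n + 1), w ^ k / k ! := by
  induction n with
  | zero => simp [iGamma_succ]
  | succ n ih =>
    rw [iGamma_succ, ih, sum_range_succ _ (n + 1), Nat.factorial_succ]
    push_cast
    field_simp
    ring

theorem gFun_eq (m : ℕ) (w : ℝ) : gFun m w = w ^ m * exp (-w) - iGamma m w := by
  rw [gFun, iGamma_succ]
  ring

theorem gFun_eq_sum {m : ℕ} (hm : 1 ≤ m) (w : ℝ) :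
    gFun m w = (m - 1)! * exp (-w) * ∑ k ∈ range m, (w ^ m / (m !) - w ^ k / k !) := by
  obtain ⟨n, rfl⟩ := Nat.exists_eq_add_of_le' hm
  rw [gFun_eq, iGamma_succ_eq_sum, sum_sub_distrib, sum_const, card_range, Nat.add_sub_cancel,
    Nat.factorial_succ, nsmul_eq_mul]
  push_cast
  field_simp

theorem pow_div_factorial_lt_pow_div_factorial {w : ℝ} {k m : ℕ} (hkm : k < m) (hmw : m < w) :
    w ^ k / k ! < w ^ m / m ! := by
  induction m with
  | zero => omega
  | succ m ih =>
    have h_step : w ^ m / m ! < w ^ (m + 1) / (m + 1)! := by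
      have hw : 0 < w := lt_of_le_of_lt (by positivity) hmw
      rw [pow_succ, Nat.factorial_succ, Nat.cast_mul, div_lt_div_iff₀ (by positivity) (by positivity)]
      push_cast at hmw ⊢
      have h_pos : 0 < w ^ m * m ! := by positivity
      nlinarith
    rcases Nat.lt_succ_iff_lt_or_eq.mp hkm with hk | rfl
    · exact (ih hk (lt_trans (by simp) hmw)).trans h_step
    · exact h_step

theorem gFun_pos {m : ℕ} (hm : 1 ≤ m) {w : ℝ} (hmw : m < w) : 0 < gFun m w := by
  rw [gFun_eq_sum hm]
  refine mul_pos (by positivity) (sum_pos (fun k hk => ?_) (nonempty_range_iff.mpr (by omega)))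
  exact sub_pos.mpr (pow_div_factorial_lt_pow_div_factorial (mem_range.mp hk) hmw)

/-- For every positive integer `m`,
`g(m, m+1) = (m−1)! e^{−(m+1)} ∑_{k=0}^{m−1} ((m+1)^m/m! − (m+1)^k/k!)`, and this quantity
is strictly positive; that is, `Γ(m+1, m+1) > (m+1) Γ(m, m+1)`. -/
theorem gFun_at_succ_pos (m : ℕ) (hm : 1 ≤ m) :
    gFun m ((m : ℝ) + 1) =
      (Nat.factorial (m - 1) : ℝ) * Real.exp (-((m : ℝ) + 1)) *
        ∑ k ∈ Finset.range m,
          (((m : ℝ) + 1) ^ m / Nat.factorial m - ((m : ℝ) + 1) ^ k / Nat.factorial k) ∧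
    ((m : ℝ) + 1) * iGamma m ((m : ℝ) + 1) < iGamma (m + 1) ((m : ℝ) + 1) := by
  refine ⟨gFun_eq_sum hm _, ?_⟩
  have h_pos := gFun_pos hm (lt_add_one (m : ℝ))
  rw [gFun] at h_pos
  linarith
end

section
/- For each positive integer m, let S_m = U_1 + ⋯ + U_m be the sum of m i.i.d. random variables uniform on [0,1], and let BRev(U^m) = sup_{x ∈ [0,m]} x · P(S_m > x) be the optimal full-bundle revenue. Then lim_{m→∞} [ m(1 + m²) / (2(1 + m)²) ] / BRev(U^m) = 1; in particular, since Rev(U^m) ≤ m(1+m²)/(2(1+m)²), the ratio Rev(U^m)/BRev(U^m) tends to 1 as m → ∞, so full bundling is asymptotically optimal for uniform i.i.d. valuations. -/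
open MeasureTheory Filter

/-- The optimal revenue `Rev(F)` of a monopolist selling `m` goods with valuation domain
`D ⊆ ℝ^m` when the buyer's valuation is distributed according to `F`: the supremum of the
expected payment over all incentive-compatible, individually rational mechanisms `(a, p)`
with allocation probabilities in `[0,1]`. -/
noncomputable def Rev (m : ℕ) (D : Set (Fin m → ℝ)) (F : Measure (Fin m → ℝ)) : ℝ :=
  sSup { r : ℝ | ∃ a : (Fin m → ℝ) → Fin m → ℝ, ∃ p : (Fin m → ℝ) → ℝ,
    Measurable a ∧ Measurable p ∧
    (∀ x ∈ D, ∀ j, a x j ∈ Set.Icc (0:ℝ) 1) ∧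
    (∀ x ∈ D, 0 ≤ (∑ j, a x j * x j) - p x) ∧
    (∀ x ∈ D, ∀ x' ∈ D, (∑ j, a x' j * x j) - p x' ≤ (∑ j, a x j * x j) - p x) ∧
    r = ∫ x, p x ∂F }

/-- The product of `m` independent uniform distributions on `[0,1]`. -/
noncomputable def uniformCube (m : ℕ) : Measure (Fin m → ℝ) :=
  Measure.pi fun _ => volume.restrict (Set.Icc (0:ℝ) 1)

/-- `P(S_m > x)`, where `S_m = U_1 + ⋯ + U_m` is the sum of `m` i.i.d. uniform `[0,1]`
random variables. -/
noncomputable def sumTail (m : ℕ) (x : ℝ) : ℝ :=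
  (Measure.map (fun v : Fin m → ℝ => ∑ j, v j) (uniformCube m) (Set.Ioi x)).toReal

/-- `BRev(U^m) = sup_{x ∈ [0,m]} x · P(S_m > x)`: the optimal revenue from selling all `m`
items as a single bundle at a posted price, for i.i.d. uniform `[0,1]` valuations. -/
noncomputable def BRev (m : ℕ) : ℝ :=
  sSup ((fun x => x * sumTail m x) '' Set.Icc (0:ℝ) m)

/-! Posting the bundle price `m/2 - a` sells with probability at least `1 - (m/12)/a²` by
Chebyshev's inequality, since `S_m` has mean `m/2` and variance `m/12`; with `a` of order `m^(2/3)`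
this gives `BRev(U^m) ≥ (1 - o(1)) m/2`. Conversely, individual rationality bounds every payment
by `∑ x_j`, so `BRev(U^m) ≤ Rev(U^m) ≤ E[S_m] = m/2`, and `m(1+m²)/(2(1+m)²) ~ m/2`. -/

open ProbabilityTheory Topology

instance : IsProbabilityMeasure (volume.restrict (Set.Icc (0:ℝ) 1)) := ⟨by simp⟩

lemma integral_restrict_Icc_zero_one (f : ℝ → ℝ) :
    ∫ x, f x ∂volume.restrict (Set.Icc (0:ℝ) 1) = ∫ x in (0:ℝ)..1, f x := by
  rw [intervalIntegral.integral_of_le zero_le_one, integral_Icc_eq_integral_Ioc]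

lemma integral_id_restrict_Icc_zero_one :
    ∫ x, x ∂volume.restrict (Set.Icc (0:ℝ) 1) = 1 / 2 := by
  rw [integral_restrict_Icc_zero_one]; norm_num [integral_id]

lemma variance_id_restrict_Icc_zero_one :
    Var[id; volume.restrict (Set.Icc (0:ℝ) 1)] = 1 / 12 := by
  rw [variance_eq_integral aemeasurable_id, integral_restrict_Icc_zero_one]
  simp only [id, integral_id_restrict_Icc_zero_one]
  rw [intervalIntegral.integral_comp_sub_right (· ^ 2)]
  norm_num [integral_pow]

lemma memLp_id_restrict_Icc_zero_one (p : ENNReal) :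
    MemLp id p (volume.restrict (Set.Icc (0:ℝ) 1)) := by
  refine MemLp.of_bound aestronglyMeasurable_id 1 ?_
  filter_upwards [ae_restrict_mem measurableSet_Icc] with x hx
  rw [id, Real.norm_eq_abs, abs_le]
  constructor <;> linarith [hx.1, hx.2]

instance (m : ℕ) : IsProbabilityMeasure (uniformCube m) := by
  unfold uniformCube; infer_instance

lemma ae_mem_Icc_uniformCube (m : ℕ) : ∀ᵐ v ∂uniformCube m, v ∈ Set.Icc 0 1 := by
  have h : ∀ j, ∀ᵐ v ∂uniformCube m, v j ∈ Set.Icc (0:ℝ) 1 := fun j =>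
    Measure.tendsto_eval_ae_ae.eventually (ae_restrict_mem measurableSet_Icc)
  filter_upwards [ae_all_iff.2 h] with v hv
  exact ⟨fun j => (hv j).1, fun j => (hv j).2⟩

lemma memLp_eval_uniformCube (m : ℕ) (j : Fin m) (p : ENNReal) :
    MemLp (fun v => v j) p (uniformCube m) :=
  (memLp_id_restrict_Icc_zero_one p).comp_measurePreserving (measurePreserving_eval _ j)

lemma memLp_sum_uniformCube (m : ℕ) (p : ENNReal) :
    MemLp (fun v => ∑ j, v j) p (uniformCube m) :=
  memLp_finsetSum _ fun j _ => memLp_eval_uniformCube m j p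

lemma integral_sum_uniformCube (m : ℕ) : ∫ v, ∑ j, v j ∂uniformCube m = m / 2 := by
  have hcoord (j : Fin m) : ∫ v, v j ∂uniformCube m = 1 / 2 := calc
    _ = ∫ x, x ∂(uniformCube m).map (Function.eval j) := by
      rw [integral_map (measurable_pi_apply j).aemeasurable (by fun_prop)]
    _ = 1 / 2 := by
      rw [uniformCube, (measurePreserving_eval _ j).map_eq]
      exact integral_id_restrict_Icc_zero_one
  rw [integral_finsetSum _ fun j _ => (memLp_eval_uniformCube m j 1).integrable le_rfl]
  simp [hcoord, div_eq_mul_inv]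

lemma variance_sum_uniformCube (m : ℕ) :
    Var[fun v => ∑ j, v j; uniformCube m] = m / 12 := by
  have := variance_sum_pi (μ := fun _ : Fin m => volume.restrict (Set.Icc (0:ℝ) 1))
    (X := fun _ => id) fun _ => memLp_id_restrict_Icc_zero_one 2
  simp only [variance_id_restrict_Icc_zero_one, Finset.sum_const, Finset.card_univ,
    Fintype.card_fin, nsmul_eq_mul] at this
  convert this using 2
  · ext v; simp
  · rfl
  · ring

lemma sumTail_eq_measureReal (m : ℕ) (x : ℝ) :
    sumTail m x = (uniformCube m).real {v | x < ∑ j, v j} := by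
  rw [sumTail, Measure.map_apply (by fun_prop) measurableSet_Ioi]; rfl

lemma mul_sumTail_le (m : ℕ) {x : ℝ} (hx : 0 ≤ x) : x * sumTail m x ≤ m / 2 := calc
  x * sumTail m x ≤ x * (uniformCube m).real {v | x ≤ ∑ j, v j} := by
    rw [sumTail_eq_measureReal]
    exact mul_le_mul_of_nonneg_left (measureReal_mono fun v (hv : x < _) => hv.le) hx
  _ ≤ ∫ v, ∑ j, v j ∂uniformCube m := by
    refine mul_meas_ge_le_integral_of_nonneg ?_ ((memLp_sum_uniformCube m 1).integrable le_rfl) x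
    filter_upwards [ae_mem_Icc_uniformCube m] with v hv
    exact Finset.sum_nonneg fun j _ => hv.1 j
  _ = m / 2 := integral_sum_uniformCube m

lemma one_sub_div_sq_le_sumTail (m : ℕ) {a : ℝ} (ha : 0 < a) :
    1 - m / 12 / a ^ 2 ≤ sumTail m (m / 2 - a) := by
  have hcheb := meas_ge_le_variance_div_sq (memLp_sum_uniformCube m 2) ha
  rw [variance_sum_uniformCube, integral_sum_uniformCube] at hcheb
  have hdev : (uniformCube m).real {v | a ≤ |∑ j, v j - m / 2|} ≤ m / 12 / a ^ 2 :=
    ENNReal.toReal_le_of_le_ofReal (by positivity) hcheb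
  have hsub : {v : Fin m → ℝ | m / 2 - a < ∑ j, v j}ᶜ ⊆ {v | a ≤ |∑ j, v j - m / 2|} := by
    intro v hv
    simp only [Set.mem_compl_iff, Set.mem_ofPred_eq, not_lt] at hv ⊢
    rw [abs_sub_comm, le_abs]
    left; linarith
  rw [sumTail_eq_measureReal]
  have := probReal_compl_eq_one_sub (μ := uniformCube m)
    (measurableSet_lt measurable_const (by fun_prop) :
      MeasurableSet {v : Fin m → ℝ | m / 2 - a < ∑ j, v j})
  linarith [measureReal_mono (μ := uniformCube m) hsub]

lemma BRev_le (m : ℕ) : BRev m ≤ m / 2 :=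
  Real.sSup_le (by rintro _ ⟨x, hx, rfl⟩; exact mul_sumTail_le m hx.1) (by positivity)

lemma mul_sumTail_le_BRev (m : ℕ) {x : ℝ} (hx : x ∈ Set.Icc (0 : ℝ) m) :
    x * sumTail m x ≤ BRev m :=
  le_csSup ⟨m / 2, by rintro _ ⟨y, hy, rfl⟩; exact mul_sumTail_le m hy.1⟩ ⟨x, hx, rfl⟩

def revenueSet (m : ℕ) (D : Set (Fin m → ℝ)) (F : Measure (Fin m → ℝ)) : Set ℝ :=
  { r : ℝ | ∃ a : (Fin m → ℝ) → Fin m → ℝ, ∃ p : (Fin m → ℝ) → ℝ,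
    Measurable a ∧ Measurable p ∧
    (∀ x ∈ D, ∀ j, a x j ∈ Set.Icc (0:ℝ) 1) ∧
    (∀ x ∈ D, 0 ≤ (∑ j, a x j * x j) - p x) ∧
    (∀ x ∈ D, ∀ x' ∈ D, (∑ j, a x' j * x j) - p x' ≤ (∑ j, a x j * x j) - p x) ∧
    r = ∫ x, p x ∂F }

lemma Rev_eq_sSup_revenueSet (m : ℕ) (D : Set (Fin m → ℝ)) (F : Measure (Fin m → ℝ)) :
    Rev m D F = sSup (revenueSet m D F) := rfl

section Revenue

variable {m : ℕ} {D : Set (Fin m → ℝ)} {F : Measure (Fin m → ℝ)}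

lemma le_integral_sum_of_mem_revenueSet (hD : ∀ x ∈ D, 0 ≤ x) (hF : ∀ᵐ x ∂F, x ∈ D)
    (hint : Integrable (fun x => ∑ j, x j) F) {r : ℝ} (hr : r ∈ revenueSet m D F) :
    r ≤ ∫ x, ∑ j, x j ∂F := by
  obtain ⟨a, p, -, -, ha, hIR, -, rfl⟩ := hr
  by_cases hp : Integrable p F
  · refine integral_mono_ae hp hint ?_
    filter_upwards [hF] with x hx
    have hpay : ∑ j, a x j * x j ≤ ∑ j, x j :=
      Finset.sum_le_sum fun j _ => mul_le_of_le_one_left (hD x hx j) (ha x hx j).2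
    linarith [hIR x hx]
  · rw [integral_undef hp]
    refine integral_nonneg_of_ae ?_
    filter_upwards [hF] with x hx
    exact Finset.sum_nonneg fun j _ => hD x hx j

lemma mul_measureReal_mem_revenueSet (t : ℝ) :
    t * F.real {x | t < ∑ j, x j} ∈ revenueSet m D F := by
  classical
  have hbuy : MeasurableSet {x : Fin m → ℝ | t < ∑ j, x j} :=
    measurableSet_lt measurable_const (by fun_prop)
  refine ⟨fun x _ => if t < ∑ j, x j then 1 else 0, fun x => if t < ∑ j, x j then t else 0,
    ?_, ?_, ?_, ?_, ?_, ?_⟩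
  · exact measurable_pi_lambda _ fun j => Measurable.ite hbuy measurable_const measurable_const
  · exact Measurable.ite hbuy measurable_const measurable_const
  · intro x _ j
    dsimp only
    split_ifs <;> simp
  · intro x _
    dsimp only
    split_ifs with h <;> simp only [one_mul, zero_mul, Finset.sum_const_zero, sub_zero] <;> linarith
  · intro x _ x' _
    dsimp only
    split_ifs with h h' h' <;>
      simp only [one_mul, zero_mul, Finset.sum_const_zero, sub_zero] <;> linarith
  · rw [mul_comm, ← smul_eq_mul, ← integral_indicator_const t hbuy]
    rfl

lemma Rev_le_integral_sum (hD : ∀ x ∈ D, 0 ≤ x) (hF : ∀ᵐ x ∂F, x ∈ D)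
    (hint : Integrable (fun x => ∑ j, x j) F) : Rev m D F ≤ ∫ x, ∑ j, x j ∂F := by
  have hfree := le_integral_sum_of_mem_revenueSet hD hF hint
    (mul_measureReal_mem_revenueSet (D := D) (F := F) 0)
  rw [zero_mul] at hfree
  rw [Rev_eq_sSup_revenueSet]
  exact Real.sSup_le (fun r hr => le_integral_sum_of_mem_revenueSet hD hF hint hr) hfree

lemma mul_measureReal_le_Rev (hD : ∀ x ∈ D, 0 ≤ x) (hF : ∀ᵐ x ∂F, x ∈ D)
    (hint : Integrable (fun x => ∑ j, x j) F) (t : ℝ) :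
    t * F.real {x | t < ∑ j, x j} ≤ Rev m D F := by
  rw [Rev_eq_sSup_revenueSet]
  exact le_csSup ⟨_, fun _ hr => le_integral_sum_of_mem_revenueSet hD hF hint hr⟩
    (mul_measureReal_mem_revenueSet t)

end Revenue

lemma Rev_uniformCube_le (m : ℕ) : Rev m (Set.Icc 0 1) (uniformCube m) ≤ m / 2 :=
  integral_sum_uniformCube m ▸ Rev_le_integral_sum (fun _ hx => hx.1) (ae_mem_Icc_uniformCube m)
    ((memLp_sum_uniformCube m 1).integrable le_rfl)

lemma BRev_le_Rev_uniformCube (m : ℕ) : BRev m ≤ Rev m (Set.Icc 0 1) (uniformCube m) := by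
  refine csSup_le ((Set.nonempty_Icc.2 (Nat.cast_nonneg m)).image _) ?_
  rintro _ ⟨t, -, rfl⟩
  show t * sumTail m t ≤ _
  rw [sumTail_eq_measureReal]
  exact mul_measureReal_le_Rev (fun _ hx => hx.1) (ae_mem_Icc_uniformCube m)
    ((memLp_sum_uniformCube m 1).integrable le_rfl) t

lemma le_BRev_div_half {m : ℕ} (hm : 0 < m) {t : ℝ} (ht0 : 0 < t) (ht1 : t ≤ 1) :
    (1 - t) * (1 - 1 / (3 * t ^ 2 * m)) ≤ BRev m / (m / 2) := by
  have hm' : (0 : ℝ) < m := Nat.cast_pos.2 hm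
  have hx : m / 2 - t * m / 2 ∈ Set.Icc (0 : ℝ) m := ⟨by nlinarith, by nlinarith⟩
  rw [le_div_iff₀ (by positivity)]
  calc (1 - t) * (1 - 1 / (3 * t ^ 2 * m)) * (m / 2)
      = (m / 2 - t * m / 2) * (1 - m / 12 / (t * m / 2) ^ 2) := by field_simp; ring
    _ ≤ (m / 2 - t * m / 2) * sumTail m (m / 2 - t * m / 2) :=
      mul_le_mul_of_nonneg_left (one_sub_div_sq_le_sumTail m (by positivity)) hx.1
    _ ≤ BRev m := mul_sumTail_le_BRev m hx

lemma tendsto_BRev_div_half : Tendsto (fun m : ℕ => BRev m / (m / 2)) atTop (𝓝 1) := by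
  set t : ℕ → ℝ := fun m => (m : ℝ) ^ (-(1 / 3) : ℝ)
  have ht : Tendsto t atTop (𝓝 0) :=
    (tendsto_rpow_neg_atTop (by norm_num)).comp tendsto_natCast_atTop_atTop
  have hlower : Tendsto (fun m => (1 - t m) * (1 - t m / 3)) atTop (𝓝 1) := by
    simpa using ((tendsto_const_nhds.sub ht).mul (tendsto_const_nhds.sub (ht.div_const 3)) :
      Tendsto _ atTop (𝓝 ((1 - 0) * (1 - 0 / 3 : ℝ))))
  refine tendsto_of_tendsto_of_tendsto_of_le_of_le' hlower tendsto_const_nhds ?_ ?_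
  · filter_upwards [eventually_gt_atTop 0] with m hm
    have hm' : (1 : ℝ) ≤ m := Nat.one_le_cast.2 hm
    -- `t = m^(-1/3)` makes Chebyshev's error term `1 / (3 t² m)` equal to `t / 3`
    have hcube : t m ^ 3 * m = 1 := by
      rw [← Real.rpow_natCast, ← Real.rpow_mul (by positivity)]
      norm_num [Real.rpow_neg_one, inv_mul_cancel₀ (by positivity : (m : ℝ) ≠ 0)]
    have ht0 : 0 < t m := by positivity
    have ht1 : t m ≤ 1 := Real.rpow_le_one_of_one_le_of_nonpos hm' (by norm_num)
    have herr : 1 / (3 * t m ^ 2 * m) = t m / 3 := by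
      rw [div_eq_div_iff (by positivity) (by norm_num)]
      linear_combination (-3) * hcube
    simpa only [herr] using le_BRev_div_half hm ht0 ht1
  · filter_upwards [eventually_gt_atTop 0] with m hm
    exact (div_le_one (by positivity)).2 (BRev_le m)

lemma tendsto_Rev_div_half :
    Tendsto (fun m : ℕ => Rev m (Set.Icc 0 1) (uniformCube m) / (m / 2)) atTop (𝓝 1) := by
  refine tendsto_of_tendsto_of_tendsto_of_le_of_le' tendsto_BRev_div_half tendsto_const_nhds ?_ ?_
  all_goals filter_upwards [eventually_gt_atTop 0] with m hm
  · exact div_le_div_of_nonneg_right (BRev_le_Rev_uniformCube m) (by positivity)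
  · exact (div_le_one (by positivity)).2 (Rev_uniformCube_le m)

lemma tendsto_revenueBound_div_half :
    Tendsto (fun m : ℕ => (m : ℝ) * (1 + (m : ℝ) ^ 2) / (2 * (1 + (m : ℝ)) ^ 2) / (m / 2))
      atTop (𝓝 1) := by
  have hinv : Tendsto (fun m : ℕ => (m : ℝ)⁻¹) atTop (𝓝 0) := tendsto_inv_atTop_nhds_zero_nat
  have hlim : Tendsto (fun m : ℕ => ((m : ℝ)⁻¹ ^ 2 + 1) / ((m : ℝ)⁻¹ + 1) ^ 2) atTop (𝓝 1) := by
    have := ((hinv.pow 2).add_const 1).div ((hinv.add_const 1).pow 2) (by norm_num)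
    rwa [zero_pow two_ne_zero, zero_add, one_pow, div_one] at this
  refine hlim.congr' ?_
  filter_upwards [eventually_gt_atTop 0] with m hm
  have hm' : (m : ℝ) ≠ 0 := by positivity
  field_simp

lemma Filter.Tendsto.div_of_tendsto_div {α : Type*} {l : Filter α} {f g h : α → ℝ} {a b : ℝ}
    (hg : ∀ᶠ x in l, g x ≠ 0) (hf : Tendsto (fun x => f x / g x) l (𝓝 a))
    (hh : Tendsto (fun x => h x / g x) l (𝓝 b)) (hb : b ≠ 0) :
    Tendsto (fun x => f x / h x) l (𝓝 (a / b)) :=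
  (hf.div hh hb).congr' (hg.mono fun _ hgx => div_div_div_cancel_right₀ hgx _ _)

/-- **Full bundling is asymptotically optimal for uniform i.i.d. valuations.**
The ratio between the upper bound `m(1+m²)/(2(1+m)²)` on `Rev(U^m)` and `BRev(U^m)` tends
to `1` as `m → ∞`; in particular (since `BRev(U^m) ≤ Rev(U^m) ≤ m(1+m²)/(2(1+m)²)`) the
ratio `Rev(U^m)/BRev(U^m)` tends to `1` as `m → ∞`. -/
theorem full_bundle_asymptotically_optimal_uniform :
    Tendsto (fun m : ℕ =>
        ((m : ℝ) * (1 + (m : ℝ) ^ 2) / (2 * (1 + (m : ℝ)) ^ 2)) / BRev m)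
      atTop (nhds 1) ∧
    Tendsto (fun m : ℕ => Rev m (Set.Icc 0 1) (uniformCube m) / BRev m)
      atTop (nhds 1) := by
  have hhalf : ∀ᶠ m : ℕ in atTop, (m : ℝ) / 2 ≠ 0 :=
    (eventually_gt_atTop 0).mono fun m hm => by positivity
  constructor
  · simpa using Tendsto.div_of_tendsto_div hhalf tendsto_revenueBound_div_half
      tendsto_BRev_div_half one_ne_zero
  · simpa using Tendsto.div_of_tendsto_div hhalf tendsto_Rev_div_half
      tendsto_BRev_div_half one_ne_zero
end
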